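/- Let |ε| < 1 and consider the dispersion process with M = (1+ε)n/2 particles. Then for all t, t₀ ∈ ℕ, the number of unhappy particles satisfies U_{t₀+t} ≤_{sd} Z_t(U_{t₀}, ε), i.e. the binomial process started from U_{t₀} with parameter ε stochastically dominates U_{t₀+t}. -/

import Mathlib

open MeasureTheory ProbabilityTheory Filter Real Topology
open scoped ENNReal

namespace Dispersion

/-- The uniform distribution on the `n` vertices `{0, …, n-1}`
(a junk Dirac measure at `0` if `n = 0`). -/
noncomputable def moveDist (n : ℕ) : Measure ℕ :=
  if h : 0 < n then
    (PMF.uniformOfFinset (Finset.range n) (Finset.nonempty_range_iff.mpr h.ne')).toMeasure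
  else Measure.dirac 0

/-- `IsDriver n μ G` says that the family `G (t, i)` of random destinations (of particle `i`
for the step from time `t` to time `t+1`) consists of independent random variables, each
uniformly distributed on the `n` vertices, on the probability space `(Ωs, μ)`.  Together
with `pos` below this encodes the dispersion process on the complete graph `K_n`
(with loops) with `M` particles. -/
structure IsDriver {Ωs : Type} [MeasurableSpace Ωs] (n : ℕ) (μ : Measure Ωs)
    (G : ℕ × ℕ → Ωs → ℕ) : Prop where
  isProb : IsProbabilityMeasure μ
  meas : ∀ p, Measurable (G p)
  unif : ∀ p, μ.map (G p) = moveDist n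
  indep : iIndepFun G μ

open Classical in
/-- The position of particle `i` (for `i < M`) at time `t` in the dispersion process:
all particles start on vertex `0`; a particle that is happy (alone on its vertex) stays
put, and an unhappy particle moves to the random destination prescribed by the driver. -/
noncomputable def pos {Ωs : Type} (M : ℕ) (G : ℕ × ℕ → Ωs → ℕ) (ω : Ωs) : ℕ → ℕ → ℕ
  | 0, _ => 0
  | t + 1, i =>
    if ∀ j, j < M → j ≠ i → pos M G ω t j ≠ pos M G ω t i then pos M G ω t i
    else G (t, i) ω

open Classical in
/-- `U M G ω t` : the number of unhappy particles at time `t`. -/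
noncomputable def U {Ωs : Type} (M : ℕ) (G : ℕ × ℕ → Ωs → ℕ) (ω : Ωs) (t : ℕ) : ℕ :=
  ((Finset.range M).filter
    (fun i => ∃ j, j < M ∧ j ≠ i ∧ pos M G ω t j = pos M G ω t i)).card

/-- The dispersion time `T_{n,M}`, as an element of `ℕ∞`. -/
noncomputable def T {Ωs : Type} (M : ℕ) (G : ℕ × ℕ → Ωs → ℕ) (ω : Ωs) : ℕ∞ :=
  sInf {m : ℕ∞ | ∃ t : ℕ, m = (t : ℕ∞) ∧ U M G ω t = 0}

/-- The event `{T_{n,M} > r}` for a real threshold `r`. -/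
def dispGT {Ωs : Type} (M : ℕ) (G : ℕ × ℕ → Ωs → ℕ) (r : ℝ) : Set Ωs :=
  {ω | ∀ t : ℕ, U M G ω t = 0 → r < (t : ℝ)}

/-- The event `{T_{n,M} ≤ r}` for a real threshold `r`. -/
def dispLE {Ωs : Type} (M : ℕ) (G : ℕ × ℕ → Ωs → ℕ) (r : ℝ) : Set Ωs :=
  {ω | ∃ t : ℕ, (t : ℝ) ≤ r ∧ U M G ω t = 0}

/-- The event `{T_{n,M} < r}` for a real threshold `r`. -/
def dispLT {Ωs : Type} (M : ℕ) (G : ℕ × ℕ → Ωs → ℕ) (r : ℝ) : Set Ωs :=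
  {ω | ∃ t : ℕ, (t : ℝ) < r ∧ U M G ω t = 0}

/-- `ε̂ = max {|ε|, e·n^{-1/2}}`. -/
noncomputable def ehat (n : ℕ) (e : ℝ) : ℝ :=
  max |e| (Real.exp 1 * (n : ℝ) ^ (-(1 / 2 : ℝ)))

/-- One step of the binomial process: from `m` individuals the next generation is
distributed as `2 · Bin(m, p)` (the parameter is truncated at `1`; in all uses below
`p ≤ 1` anyway). -/
noncomputable def binStep (p : ℝ≥0∞) (m : ℕ) : PMF ℕ :=
  (PMF.binomial (min p 1).toNNReal
    (by have := ENNReal.toNNReal_mono ENNReal.one_ne_top (min_le_right p 1); simpa using this) m).map (fun k => 2 * (k : ℕ))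

/-- The binomial process `Z_t` started at `m` with success parameter `p`:
`Z_0 = m` and `Z_{t+1} =_d 2 · Bin(Z_t, p)`. -/
noncomputable def Zpmf (p : ℝ≥0∞) : ℕ → ℕ → PMF ℕ
  | 0, m => PMF.pure m
  | t + 1, m => (Zpmf p t m).bind (binStep p)

end Dispersion

/-!
Given the configuration at time `s`, the destinations drawn at time `s` are fresh independent
uniform vertices. Go through the unhappy particles in increasing order and say that a particle
collides if its destination is occupied by a happy particle or is the destination of an earlier
unhappy particle. At most `M` vertices are forbidden to each particle, so it collides with
conditional probability at most `M / n = (1 + ε) / 2`, and the number of collisions is dominated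
by `Bin(U_s, (1 + ε) / 2)`. A particle that is unhappy at time `s + 1` without having collided
shares its vertex with a particle that collided, and no two of these share a vertex; hence
`U_{s+1}` is at most twice the number of collisions. Binomial tails increase with the number of
trials, so this one-step domination iterates to the binomial process.
-/

open Finset

namespace MeasureTheory

lemma lintegral_le_lintegral_of_tail_le {μ ν : Measure ℕ} {g : ℕ → ℝ≥0∞} (hg : Monotone g)
    (h : ∀ y, μ {k | y ≤ k} ≤ ν {k | y ≤ k}) : ∫⁻ k, g k ∂μ ≤ ∫⁻ k, g k ∂ν := by
  have htelescope (k : ℕ) : g k = g 0 + ∑ y ∈ range k, (g (y + 1) - g y) := by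
    induction k with
    | zero => simp
    | succ k ih => rw [sum_range_succ, ← add_assoc, ← ih, add_tsub_cancel_of_le (hg k.le_succ)]
  have hg_eq (k : ℕ) :
      g k = g 0 + ∑' y, (g (y + 1) - g y) * {k | y + 1 ≤ k}.indicator 1 k := by
    rw [htelescope k, tsum_eq_sum (s := range k) fun y hy => by
      rw [Set.indicator_of_notMem (by simp at hy ⊢; omega), mul_zero]]
    exact congrArg _ (sum_congr rfl fun y hy => by
      rw [Set.indicator_of_mem (by simp at hy ⊢; omega), Pi.one_apply, mul_one])
  have hlintegral (ρ : Measure ℕ) : ∫⁻ k, g k ∂ρ =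
      g 0 * ρ {k | 0 ≤ k} + ∑' y, (g (y + 1) - g y) * ρ {k | y + 1 ≤ k} := by
    rw [lintegral_congr hg_eq, lintegral_add_left measurable_const, lintegral_const,
      lintegral_tsum fun _ => Measurable.of_discrete.aemeasurable]
    simp_rw [lintegral_const_mul _ Measurable.of_discrete,
      lintegral_indicator_one MeasurableSet.of_discrete]
    simp
  rw [hlintegral, hlintegral]
  exact add_le_add (mul_le_mul_right (h 0) _)
    (ENNReal.tsum_le_tsum fun y => mul_le_mul_right (h (y + 1)) _)

end MeasureTheory

namespace ProbabilityTheory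

variable {ι Ω α β γ : Type*} [MeasurableSpace Ω] {μ : Measure Ω}
  [mα : MeasurableSpace α] [MeasurableSpace β] [MeasurableSpace γ]

lemma iIndepFun.indepFun_of_measurable_iSup {Y : ι → Ω → α} (hY : iIndepFun Y μ)
    (hm : ∀ i, Measurable (Y i)) {S T : Set ι} (hST : Disjoint S T) {X : Ω → β} {Z : Ω → γ}
    (hX : Measurable[⨆ i ∈ S, mα.comap (Y i)] X) (hZ : Measurable[⨆ i ∈ T, mα.comap (Y i)] Z) :
    IndepFun X Z μ := by
  rw [IndepFun_iff_Indep]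
  exact indep_of_indep_of_le_right (indep_of_indep_of_le_left (indep_iSup_of_disjoint
    (fun i => (hm i).comap_le) ((iIndepFun_iff_iIndep _ _ _).1 hY) hST) hX.comap_le) hZ.comap_le

lemma IndepFun.measure_prodMk_mem_eq_lintegral [IsFiniteMeasure μ] {X : Ω → α} {Z : Ω → β}
    (h : IndepFun X Z μ) (hX : Measurable X) (hZ : Measurable Z) {A : Set (α × β)}
    (hA : MeasurableSet A) :
    μ {ω | (X ω, Z ω) ∈ A} = ∫⁻ x, μ {ω | (x, Z ω) ∈ A} ∂(μ.map X) := by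
  change μ ((fun ω => (X ω, Z ω)) ⁻¹' A) = _
  rw [← Measure.map_apply (hX.prodMk hZ) hA,
    (indepFun_iff_map_prod_eq_prod_map_map hX.aemeasurable hZ.aemeasurable).1 h,
    Measure.prod_apply hA]
  exact lintegral_congr fun x => Measure.map_apply hZ (measurable_prodMk_left hA)

lemma IndepFun.measure_le_add_ite_le [IsProbabilityMeasure μ] [Countable α]
    [MeasurableSingletonClass α] {Z : Ω → α} {X : Ω → ℕ} (hind : IndepFun Z X μ)
    (hZ : Measurable Z) (hX : Measurable X) {p : ℝ≥0∞} (hp : p ≤ 1) (h : α → ℕ)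
    (E : α → Finset ℕ) (hE : ∀ v, μ (X ⁻¹' E v) ≤ p) (y : ℕ) :
    μ {ω | y ≤ h (Z ω) + if X ω ∈ E (Z ω) then 1 else 0} ≤
      (1 - p) * μ {ω | y ≤ h (Z ω)} + p * μ {ω | y - 1 ≤ h (Z ω)} := by
  let A : Set (α × ℕ) := {vx | y ≤ h vx.1 + if vx.2 ∈ E vx.1 then 1 else 0}
  have hfiber (v : α) : μ {ω | (v, X ω) ∈ A} ≤
      (1 - p) * {v | y ≤ h v}.indicator 1 v + p * {v | y - 1 ≤ h v}.indicator 1 v := by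
    by_cases h₁ : y ≤ h v
    · simp [Set.indicator_of_mem, h₁, show y ≤ h v + 1 by omega, tsub_add_cancel_of_le hp,
        prob_le_one]
    by_cases h₂ : y = h v + 1
    · have hA : {ω | (v, X ω) ∈ A} = X ⁻¹' E v := by
        ext ω
        simp only [A, Set.mem_ofPred_eq, Set.mem_preimage, mem_coe]
        split_ifs <;> simp_all
      rw [hA, Set.indicator_of_notMem (by simpa using h₁),
        Set.indicator_of_mem (by simp [h₂]), mul_zero, zero_add, Pi.one_apply, mul_one]
      exact hE v
    · have hA : {ω | (v, X ω) ∈ A} = ∅ := by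
        ext ω
        simp only [A, Set.mem_ofPred_eq, Set.mem_empty_iff_false, iff_false]
        split_ifs <;> omega
      simp [hA]
  calc μ {ω | (Z ω, X ω) ∈ A}
      = ∫⁻ v, μ {ω | (v, X ω) ∈ A} ∂(μ.map Z) :=
        hind.measure_prodMk_mem_eq_lintegral hZ hX MeasurableSet.of_discrete
    _ ≤ ∫⁻ v, (1 - p) * {v | y ≤ h v}.indicator 1 v +
          p * {v | y - 1 ≤ h v}.indicator 1 v ∂(μ.map Z) := lintegral_mono hfiber
    _ = (1 - p) * μ {ω | y ≤ h (Z ω)} + p * μ {ω | y - 1 ≤ h (Z ω)} := by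
        rw [lintegral_add_left (Measurable.of_discrete.const_mul _),
          lintegral_const_mul _ Measurable.of_discrete,
          lintegral_const_mul _ Measurable.of_discrete,
          lintegral_indicator_one MeasurableSet.of_discrete,
          lintegral_indicator_one MeasurableSet.of_discrete,
          Measure.map_apply hZ MeasurableSet.of_discrete,
          Measure.map_apply hZ MeasurableSet.of_discrete]
        rfl

end ProbabilityTheory

namespace Dispersion

section BinomialTail

variable (p : ℝ≥0∞)

noncomputable def binomPmf (k j : ℕ) : ℝ≥0∞ := k.choose j * p ^ j * (1 - p) ^ (k - j)

noncomputable def binomTail (k y : ℕ) : ℝ≥0∞ := ∑' j, if y ≤ j then binomPmf p k j else 0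

variable {p}

lemma binomPmf_succ_succ (k j : ℕ) :
    binomPmf p (k + 1) (j + 1) = (1 - p) * binomPmf p k (j + 1) + p * binomPmf p k j := by
  rcases lt_or_ge j k with hjk | hkj
  · obtain ⟨d, rfl⟩ := Nat.exists_eq_add_of_lt hjk
    simp only [binomPmf, Nat.choose_succ_succ', Nat.cast_add,
      show j + d + 1 + 1 - (j + 1) = d + 1 by omega, show j + d + 1 - (j + 1) = d by omega,
      show j + d + 1 - j = d + 1 by omega]
    ring
  · simp [binomPmf, Nat.choose_succ_succ', Nat.choose_eq_zero_of_lt (Nat.lt_succ_of_le hkj),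
      Nat.sub_eq_zero_of_le hkj, pow_succ]
    ring

lemma binomTail_zero_right (hp : p ≤ 1) (k : ℕ) : binomTail p k 0 = 1 := by
  have hsupp : ∀ j ∉ range (k + 1), binomPmf p k j = 0 := fun j hj => by
    simp [binomPmf, Nat.choose_eq_zero_of_lt (by simpa using hj : k < j)]
  have binomial_theorem := (add_pow p (1 - p) k).symm
  rw [add_tsub_cancel_of_le hp, one_pow] at binomial_theorem
  simp only [binomTail, zero_le, if_true]
  rw [tsum_eq_sum hsupp, ← binomial_theorem]
  exact sum_congr rfl fun j _ => by simp only [binomPmf]; ring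

lemma binomTail_succ_succ (k y : ℕ) :
    binomTail p (k + 1) (y + 1) = (1 - p) * binomTail p k (y + 1) + p * binomTail p k y := by
  have shift (f : ℕ → ℝ≥0∞) :
      (∑' j, if y + 1 ≤ j then f j else 0) = ∑' j, if y ≤ j then f (j + 1) else 0 := by
    rw [tsum_eq_zero_add' ENNReal.summable]
    simp
  rw [binomTail, binomTail, binomTail, shift, shift, ← ENNReal.tsum_mul_left,
    ← ENNReal.tsum_mul_left, ← ENNReal.tsum_add]
  exact tsum_congr fun j => by split_ifs <;> simp [binomPmf_succ_succ]

lemma binomTail_succ (hp : p ≤ 1) (k y : ℕ) :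
    binomTail p (k + 1) y = (1 - p) * binomTail p k y + p * binomTail p k (y - 1) := by
  cases y with
  | zero => simp [binomTail_zero_right hp, tsub_add_cancel_of_le hp]
  | succ y => exact binomTail_succ_succ k y

lemma binomTail_antitone (k : ℕ) : Antitone (binomTail p k) :=
  fun _ _ h => ENNReal.tsum_le_tsum fun j => by split_ifs <;> simp_all; omega

lemma binomTail_mono_left (hp : p ≤ 1) (y : ℕ) : Monotone fun k => binomTail p k y := by
  refine monotone_nat_of_le_succ fun k => ?_
  calc binomTail p k y = (1 - p) * binomTail p k y + p * binomTail p k y := by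
        rw [← add_mul, tsub_add_cancel_of_le hp, one_mul]
    _ ≤ binomTail p (k + 1) y := by
        rw [binomTail_succ hp]
        gcongr
        exact binomTail_antitone k (Nat.sub_le y 1)

end BinomialTail

lemma binStep_toMeasure_tail {p : ℝ≥0∞} (hp : p ≤ 1) (k z : ℕ) :
    (binStep p k).toMeasure {x | z ≤ x} = binomTail p k ((z + 1) / 2) := by
  have hp' : (((min p 1).toNNReal : NNReal) : ℝ≥0∞) = p := by
    rw [min_eq_left hp, ENNReal.coe_toNNReal (ne_top_of_le_ne_top ENNReal.one_ne_top hp)]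
  have hsupp : ∀ j ∉ range (k + 1), (if (z + 1) / 2 ≤ j then binomPmf p k j else 0) = 0 :=
    fun j hj => by simp [binomPmf, Nat.choose_eq_zero_of_lt (by simpa using hj : k < j)]
  show (PMF.map _ (PMF.map ((↑) : Fin (k + 1) → ℕ) _)).toMeasure _ = _
  rw [PMF.map_comp, PMF.toMeasure_map_apply _ _ _ Measurable.of_discrete MeasurableSet.of_discrete,
    PMF.toMeasure_apply_eq_tsum, tsum_fintype, binomTail, tsum_eq_sum hsupp,
    ← Fin.sum_univ_eq_sum_range (fun j => if (z + 1) / 2 ≤ j then binomPmf p k j else 0)]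
  refine sum_congr rfl fun j _ => ?_
  have hmem : j ∈ ((2 * ·) ∘ (↑) : Fin (k + 1) → ℕ) ⁻¹' {x | z ≤ x} ↔ (z + 1) / 2 ≤ j := by
    simp only [Set.mem_preimage, Function.comp_apply, Set.mem_ofPred_eq]
    omega
  split_ifs with hj
  · rw [Set.indicator_of_mem (hmem.2 hj), PMF.binomial_apply, Fin.val_last, binomPmf]
    push_cast [ENNReal.coe_sub, hp']
    ring
  · exact Set.indicator_of_notMem (mt hmem.1 hj) _

section Configurations

variable {ι β : Type*}

def IsHappy (c : ι → β) (i : ι) : Prop := ∀ j, j ≠ i → c j ≠ c i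

open Classical in
noncomputable def unhappy [Fintype ι] (c : ι → β) : Finset ι :=
  univ.filter fun i => ¬ IsHappy c i

open Classical in
noncomputable def happyVertices [Fintype ι] [DecidableEq β] (c : ι → β) : Finset β :=
  (univ.filter (IsHappy c)).image c

open Classical in
noncomputable def dispersionStep (c w : ι → β) : ι → β :=
  fun i => if IsHappy c i then c i else w i

noncomputable def collisions [LinearOrder ι] [DecidableEq β] (D : Finset β) (I : Finset ι)
    (w : ι → β) : Finset ι :=
  I.filter fun i => w i ∈ D ∪ (I.filter (· < i)).image w

lemma not_isHappy_iff {c : ι → β} {i : ι} : ¬ IsHappy c i ↔ ∃ j, j ≠ i ∧ c j = c i := by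
  simp [IsHappy]

lemma card_happyVertices_add_card_unhappy_le [Fintype ι] [DecidableEq β] (c : ι → β) :
    #(happyVertices c) + #(unhappy c) ≤ Fintype.card ι := by
  classical
  rw [← card_univ, ← card_filter_add_card_filter_not (s := univ) (IsHappy c)]
  exact Nat.add_le_add_right card_image_le _

variable [LinearOrder ι] [DecidableEq β]

lemma collisions_congr (D : Finset β) (I : Finset ι) {w w' : ι → β} (h : ∀ i ∈ I, w i = w' i) :
    collisions D I w = collisions D I w' := by
  unfold collisions
  refine filter_congr fun i hi => ?_
  rw [h i hi, image_congr fun j hj => h j (mem_filter.1 hj).1]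

lemma card_collisions_insert (D : Finset β) {I : Finset ι} {a : ι} (ha : ∀ j ∈ I, j < a)
    (w : ι → β) :
    #(collisions D (insert a I) w) =
      #(collisions D I w) + if w a ∈ D ∪ I.image w then 1 else 0 := by
  have haI : a ∉ I := fun h => (ha a h).false
  have hlt : (insert a I).filter (· < a) = I := by
    ext j
    simp only [mem_filter, mem_insert]
    exact ⟨fun ⟨h, hj⟩ => h.resolve_left (ne_of_lt hj), fun h => ⟨Or.inr h, ha j h⟩⟩
  have hrest : I.filter (fun i => w i ∈ D ∪ ((insert a I).filter (· < i)).image w) =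
      collisions D I w := by
    refine filter_congr fun i hi => ?_
    rw [filter_insert, if_neg (ha i hi).not_gt]
  rw [collisions, filter_insert, hlt, hrest]
  split_ifs
  · rw [card_insert_of_notMem (fun h => haI (mem_filter.1 h).1 : a ∉ collisions D I w)]
  · rfl

/-- Particles that did not collide occupy distinct vertices after the step, and each unhappy
one among them shares its vertex with a particle that collided. -/
lemma card_unhappy_dispersionStep_le [Fintype ι] (c w : ι → β) :
    #(unhappy (dispersionStep c w)) ≤ 2 * #(collisions (happyVertices c) (unhappy c) w) := by
  classical
  set c' := dispersionStep c w
  set B := collisions (happyVertices c) (unhappy c) w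
  have step_of_happy {i} (hi : IsHappy c i) : c' i = c i := if_pos hi
  have step_of_unhappy {i} (hi : ¬ IsHappy c i) : c' i = w i := if_neg hi
  have mem_B {i k} (hik : i ≠ k) (hc : c' i = c' k) (hk : ¬ IsHappy c k)
      (hi : IsHappy c i ∨ i < k) : k ∈ B := by
    simp only [B, collisions, unhappy, mem_filter, mem_univ, true_and, mem_union,
      happyVertices, mem_image]
    refine ⟨hk, ?_⟩
    by_cases hhi : IsHappy c i
    · exact Or.inl ⟨i, hhi, by rw [← step_of_happy hhi, hc, step_of_unhappy hk]⟩
    · exact Or.inr ⟨i, ⟨hhi, hi.resolve_left hhi⟩, by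
        rw [← step_of_unhappy hhi, hc, step_of_unhappy hk]⟩
  have hinj : Set.InjOn c' {i | i ∉ B} := by
    intro i hiB k hkB hc
    by_contra hik
    by_cases hi : IsHappy c i <;> by_cases hk : IsHappy c k
    · exact hk i hik (by rw [← step_of_happy hi, ← step_of_happy hk, hc])
    · exact hkB (mem_B hik hc hk (Or.inl hi))
    · exact hiB (mem_B (Ne.symm hik) hc.symm hi (Or.inl hk))
    · rcases lt_or_gt_of_ne hik with h | h
      · exact hkB (mem_B hik hc hk (Or.inr h))
      · exact hiB (mem_B (Ne.symm hik) hc.symm hi (Or.inr h))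
  have hmaps : Set.MapsTo c' ↑(unhappy c' \ B) ↑(B.image c') := by
    intro k hk
    simp only [coe_sdiff, Set.mem_sdiff, mem_coe, unhappy, mem_filter, mem_univ, true_and,
      not_isHappy_iff] at hk
    obtain ⟨⟨i, hik, hc⟩, hkB⟩ := hk
    have hiB : i ∈ B := by
      by_contra hiB
      exact hik (hinj hiB hkB hc)
    exact mem_coe.2 (hc ▸ mem_image_of_mem c' hiB)
  calc #(unhappy c') ≤ #(unhappy c' \ B) + #B := card_le_card_sdiff_add_card
    _ ≤ #(B.image c') + #B :=
        Nat.add_le_add_right (card_le_card_of_injOn c' hmaps (hinj.mono fun k hk => by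
          simp only [coe_sdiff, Set.mem_sdiff] at hk; exact hk.2)) _
    _ ≤ 2 * #B := by linarith [card_image_le (s := B) (f := c')]

end Configurations

theorem measure_le_card_collisions_le_binomTail {ι Ω : Type*} [Fintype ι] [LinearOrder ι]
    [MeasurableSpace Ω] {μ : Measure Ω} [IsProbabilityMeasure μ] {Y : ι → Ω → ℕ}
    (hY : iIndepFun Y μ) (hm : ∀ i, Measurable (Y i)) {p : ℝ≥0∞} (hp : p ≤ 1)
    (D : Finset ℕ) (I : Finset ι)
    (hbound : ∀ i ∈ I, ∀ E : Finset ℕ, #E ≤ #D + #I → μ (Y i ⁻¹' E) ≤ p) (y : ℕ) :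
    μ {ω | y ≤ #(collisions D I (Y · ω))} ≤ binomTail p #I y := by
  classical
  induction I using Finset.induction_on_max generalizing y with
  | empty =>
    cases y with
    | zero => simp [binomTail_zero_right hp]
    | succ y => simp [collisions]
  | insert a I ha ih =>
    have haI : a ∉ I := fun h => (ha a h).false
    rw [card_insert_of_notMem haI] at hbound ⊢
    have ih' := ih fun i hi E hE => hbound i (mem_insert_of_mem hi) E (by omega)
    let Z : Ω → ι → ℕ := fun ω j => if j ∈ I then Y j ω else 0
    have hZ_eq (ω : Ω) : ∀ j ∈ I, Y j ω = Z ω j := fun j hj => by simp [Z, hj]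
    have hZ : Measurable[⨆ j ∈ (I : Set ι), MeasurableSpace.comap (Y j) inferInstance] Z := by
      refine @measurable_pi_lambda _ _ _ (_) _ Z fun j => ?_
      by_cases hj : j ∈ I
      · simpa [Z, hj] using Measurable.of_comap_le (le_iSup₂
          (f := fun j (_ : j ∈ (I : Set ι)) => MeasurableSpace.comap (Y j) inferInstance) j hj)
      · simp [Z, hj]
    have hYa : Measurable[⨆ j ∈ ({a} : Set ι), MeasurableSpace.comap (Y j) inferInstance] (Y a) :=
      Measurable.of_comap_le (le_iSup₂
        (f := fun j (_ : j ∈ ({a} : Set ι)) => MeasurableSpace.comap (Y j) inferInstance) a rfl)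
    have hindep : IndepFun Z (Y a) μ :=
      hY.indepFun_of_measurable_iSup hm (Set.disjoint_singleton_right.2 haI) hZ hYa
    have hE (v : ι → ℕ) : μ (Y a ⁻¹' ↑(D ∪ I.image v)) ≤ p := by
      refine hbound a (mem_insert_self a I) _ ?_
      have := card_union_le D (I.image v)
      have := card_image_le (s := I) (f := v)
      omega
    have hsucc := hindep.measure_le_add_ite_le (hZ.mono (iSup₂_le fun j _ => (hm j).comap_le)
      le_rfl) (hm a) hp (fun v => #(collisions D I v)) (fun v => D ∪ I.image v) hE y
    simp only [← collisions_congr D I (hZ_eq _), ← image_congr (hZ_eq _)] at hsucc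
    calc μ {ω | y ≤ #(collisions D (insert a I) (Y · ω))}
        ≤ (1 - p) * μ {ω | y ≤ #(collisions D I (Y · ω))} +
            p * μ {ω | y - 1 ≤ #(collisions D I (Y · ω))} := by
          simpa only [card_collisions_insert D ha] using hsucc
      _ ≤ (1 - p) * binomTail p #I y + p * binomTail p #I (y - 1) := by
          gcongr
          exacts [ih' y, ih' (y - 1)]
      _ = binomTail p (#I + 1) y := (binomTail_succ hp _ _).symm

section Dynamics

variable {Ω : Type} {n M : ℕ} {G : ℕ × ℕ → Ω → ℕ}

noncomputable def config (M : ℕ) (G : ℕ × ℕ → Ω → ℕ) (t : ℕ) (ω : Ω) : Fin M → ℕ :=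
  fun i => pos M G ω t i

def destinations (M : ℕ) (G : ℕ × ℕ → Ω → ℕ) (t : ℕ) (ω : Ω) : Fin M → ℕ :=
  fun i => G (t, i) ω

lemma config_succ (t : ℕ) (ω : Ω) :
    config M G (t + 1) ω = dispersionStep (config M G t ω) (destinations M G t ω) := by
  classical
  funext i
  have hhappy : (∀ j, j < M → j ≠ i → pos M G ω t j ≠ pos M G ω t i) ↔
      IsHappy (config M G t ω) i := by
    simp only [IsHappy, config, Fin.forall_iff, ne_eq, Fin.ext_iff]
  simp only [config, destinations, dispersionStep, pos]
  exact if_congr hhappy rfl rfl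

lemma U_eq_card_unhappy (t : ℕ) (ω : Ω) : U M G ω t = #(unhappy (config M G t ω)) := by
  rw [U, unhappy, card_filter, card_filter, ← Fin.sum_univ_eq_sum_range]
  refine sum_congr rfl fun i _ => ?_
  simp only [not_isHappy_iff, config, Fin.exists_iff, ne_eq, Fin.ext_iff]
  exact if_congr ⟨fun ⟨j, hj, h⟩ => ⟨j, hj, h⟩, fun ⟨j, hj, h⟩ => ⟨j, hj, h⟩⟩ rfl rfl

lemma measurable_destinations_iSup (t : ℕ) {S : Set (ℕ × ℕ)} (hS : ∀ i : Fin M, (t, ↑i) ∈ S) :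
    Measurable[⨆ q ∈ S, MeasurableSpace.comap (G q) inferInstance] (destinations M G t) :=
  @measurable_pi_lambda _ _ _ (_) _ _ fun i => Measurable.of_comap_le
    (le_iSup₂ (f := fun q (_ : q ∈ S) => MeasurableSpace.comap (G q) inferInstance) _ (hS i))

lemma measurable_config_iSup (t : ℕ) :
    Measurable[⨆ q ∈ {q : ℕ × ℕ | q.1 < t}, MeasurableSpace.comap (G q) inferInstance]
      (config M G t) := by
  induction t with
  | zero => exact measurable_const (a := fun _ : Fin M => 0)
  | succ t ih =>
    rw [show config M G (t + 1) = _ from funext (config_succ t)]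
    refine Measurable.of_discrete.comp (g := fun cw : (Fin M → ℕ) × (Fin M → ℕ) =>
      dispersionStep cw.1 cw.2) (Measurable.prodMk ?_ ?_)
    · exact ih.mono (biSup_mono fun q (hq : q.1 < t) => show q.1 < t + 1 by omega) le_rfl
    · exact measurable_destinations_iSup t fun i => show t < t + 1 by omega

variable [MeasurableSpace Ω] {μ : Measure Ω}

lemma measurable_config (hG : ∀ q, Measurable (G q)) (t : ℕ) : Measurable (config M G t) :=
  (measurable_config_iSup t).mono (iSup₂_le fun q _ => (hG q).comap_le) le_rfl

lemma measurable_U (hG : ∀ q, Measurable (G q)) (t : ℕ) : Measurable (U M G · t) := by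
  simp_rw [U_eq_card_unhappy]
  exact Measurable.of_discrete.comp (g := fun c : Fin M → ℕ => #(unhappy c))
    (measurable_config hG t)

lemma IsDriver.measure_preimage_le (hG : IsDriver n μ G) (hn : 0 < n) (q : ℕ × ℕ)
    (E : Finset ℕ) : μ (G q ⁻¹' E) ≤ #E / n := by
  rw [← Measure.map_apply (hG.meas q) MeasurableSet.of_discrete, hG.unif q, moveDist, dif_pos hn,
    PMF.toMeasure_uniformOfFinset_apply _ _ MeasurableSet.of_discrete, card_range]
  gcongr
  exact fun x hx => by simp_all

lemma measure_le_card_collisions_destinations_le_binomTail (hG : IsDriver n μ G) (hn : 0 < n)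
    (hMn : M ≤ n) (s : ℕ) (c : Fin M → ℕ) (y : ℕ) :
    μ {ω | y ≤ #(collisions (happyVertices c) (unhappy c) (destinations M G s ω))} ≤
      binomTail ((M : ℝ≥0∞) / n) #(unhappy c) y := by
  have := hG.isProb
  have hbound (i : Fin M) (E : Finset ℕ) (hE : #E ≤ #(happyVertices c) + #(unhappy c)) :
      μ ((fun ω => G (s, i) ω) ⁻¹' E) ≤ (M : ℝ≥0∞) / n := by
    have := card_happyVertices_add_card_unhappy_le c
    rw [Fintype.card_fin] at this
    exact (hG.measure_preimage_le hn _ E).trans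
      (ENNReal.div_le_div_right (by exact_mod_cast hE.trans this) _)
  exact measure_le_card_collisions_le_binomTail
    (hG.indep.precomp fun i j h => Fin.ext (Prod.ext_iff.1 h).2) (fun i => hG.meas _)
    (ENNReal.div_le_of_le_mul (by rw [one_mul]; exact_mod_cast hMn)) _ _ (fun i _ => hbound i) y

theorem measure_le_U_succ_le_lintegral_binomTail (hG : IsDriver n μ G) (hn : 0 < n)
    (hMn : M ≤ n) (s z : ℕ) :
    μ {ω | z ≤ U M G ω (s + 1)} ≤
      ∫⁻ ω, binomTail ((M : ℝ≥0∞) / n) (U M G ω s) ((z + 1) / 2) ∂μ := by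
  have := hG.isProb
  let A : Set ((Fin M → ℕ) × (Fin M → ℕ)) :=
    {cw | (z + 1) / 2 ≤ #(collisions (happyVertices cw.1) (unhappy cw.1) cw.2)}
  have hsub : {ω | z ≤ U M G ω (s + 1)} ⊆ {ω | (config M G s ω, destinations M G s ω) ∈ A} := by
    intro ω hω
    have := card_unhappy_dispersionStep_le (config M G s ω) (destinations M G s ω)
    simp only [Set.mem_ofPred_eq, U_eq_card_unhappy, config_succ, A] at hω ⊢
    omega
  have hindep : IndepFun (config M G s) (destinations M G s) μ :=
    hG.indep.indepFun_of_measurable_iSup hG.meas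
      (Set.disjoint_left.2 fun q (hq : q.1 < s) (hq' : q.1 = s) => by omega)
      (measurable_config_iSup s) (measurable_destinations_iSup s fun _ => rfl)
  calc μ {ω | z ≤ U M G ω (s + 1)}
      ≤ μ {ω | (config M G s ω, destinations M G s ω) ∈ A} := measure_mono hsub
    _ = ∫⁻ c, μ {ω | (c, destinations M G s ω) ∈ A} ∂(μ.map (config M G s)) :=
        hindep.measure_prodMk_mem_eq_lintegral (measurable_config hG.meas s)
          (measurable_pi_lambda _ fun i => hG.meas _) MeasurableSet.of_discrete
    _ ≤ ∫⁻ c, binomTail ((M : ℝ≥0∞) / n) #(unhappy c) ((z + 1) / 2) ∂(μ.map (config M G s)) :=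
        lintegral_mono fun c => measure_le_card_collisions_destinations_le_binomTail hG hn hMn s c _
    _ = ∫⁻ ω, binomTail ((M : ℝ≥0∞) / n) (U M G ω s) ((z + 1) / 2) ∂μ := by
        rw [lintegral_map Measurable.of_discrete (measurable_config hG.meas s)]
        simp_rw [U_eq_card_unhappy]

lemma Zpmf_succ_toMeasure_apply (p : ℝ≥0∞) (t m : ℕ) (S : Set ℕ) :
    (Zpmf p (t + 1) m).toMeasure S =
      ∫⁻ k, (binStep p k).toMeasure S ∂(Zpmf p t m).toMeasure := by
  rw [Zpmf, PMF.toMeasure_bind_apply _ _ _ MeasurableSet.of_discrete, lintegral_countable']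
  exact tsum_congr fun k => by
    rw [PMF.toMeasure_apply_singleton _ _ (measurableSet_singleton k), mul_comm]

theorem measure_le_U_le_bind_Zpmf (hG : IsDriver n μ G) (hn : 0 < n) (hMn : M ≤ n)
    (t₀ t z : ℕ) :
    μ {ω | z ≤ U M G ω (t₀ + t)} ≤
      ((μ.map (U M G · t₀)).bind fun m => (Zpmf ((M : ℝ≥0∞) / n) t m).toMeasure)
        {x | z ≤ x} := by
  set p : ℝ≥0∞ := (M : ℝ≥0∞) / n
  have hp : p ≤ 1 := ENNReal.div_le_of_le_mul (by rw [one_mul]; exact_mod_cast hMn)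
  induction t generalizing z with
  | zero =>
    simp only [Zpmf, PMF.toMeasure_pure]
    rw [Measure.bind_dirac, Measure.map_apply (measurable_U hG.meas t₀) MeasurableSet.of_discrete]
    rfl
  | succ t ih =>
    set ν := (μ.map (U M G · t₀)).bind fun m => (Zpmf p t m).toMeasure
    calc μ {ω | z ≤ U M G ω (t₀ + (t + 1))}
        ≤ ∫⁻ ω, binomTail p (U M G ω (t₀ + t)) ((z + 1) / 2) ∂μ :=
          measure_le_U_succ_le_lintegral_binomTail hG hn hMn (t₀ + t) z
      _ = ∫⁻ k, binomTail p k ((z + 1) / 2) ∂(μ.map (U M G · (t₀ + t))) :=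
          (lintegral_map (f := fun k => binomTail p k ((z + 1) / 2)) Measurable.of_discrete
            (measurable_U hG.meas _)).symm
      _ ≤ ∫⁻ k, binomTail p k ((z + 1) / 2) ∂ν :=
          lintegral_le_lintegral_of_tail_le (binomTail_mono_left hp _) fun y => by
            rw [Measure.map_apply (measurable_U hG.meas _) MeasurableSet.of_discrete]
            exact ih y
      _ = ν.bind (fun k => (binStep p k).toMeasure) {x | z ≤ x} := by
          rw [Measure.bind_apply MeasurableSet.of_discrete Measurable.of_discrete.aemeasurable]
          simp_rw [binStep_toMeasure_tail hp]
      _ = _ := by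
          rw [Measure.bind_bind Measurable.of_discrete.aemeasurable
            Measurable.of_discrete.aemeasurable]
          congr 2
          ext m S hS
          rw [Measure.bind_apply hS Measurable.of_discrete.aemeasurable,
            Zpmf_succ_toMeasure_apply]

end Dynamics

theorem statement6_general (n : ℕ) (hn : 1 ≤ n) (ε : ℝ) (hε : |ε| < 1) (M : ℕ)
    (hM : (M : ℝ) = (1 + ε) * n / 2)
    (Ωs : Type) [MeasurableSpace Ωs] (μ : Measure Ωs) (G : ℕ × ℕ → Ωs → ℕ)
    (hG : IsDriver n μ G) (t₀ t : ℕ) :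
    ∀ z : ℕ,
      μ {ω | z ≤ U M G ω (t₀ + t)} ≤
        ∑' m : ℕ,
          μ {ω | U M G ω t₀ = m} *
            (Zpmf (ENNReal.ofReal ((1 + ε) / 2)) t m).toMeasure {x | z ≤ x} := by
  intro z
  have hn₀ : (0 : ℝ) < n := by exact_mod_cast hn
  have hMn : M ≤ n := by
    have : (M : ℝ) ≤ n := by
      rw [hM]
      nlinarith [(abs_lt.1 hε).2]
    exact_mod_cast this
  have hp : ENNReal.ofReal ((1 + ε) / 2) = (M : ℝ≥0∞) / n := by
    rw [show (1 + ε) / 2 = (M : ℝ) / n by rw [hM]; field_simp, ENNReal.ofReal_div_of_pos hn₀,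
      ENNReal.ofReal_natCast, ENNReal.ofReal_natCast]
  rw [hp]
  refine (measure_le_U_le_bind_Zpmf hG hn hMn t₀ t z).trans_eq ?_
  rw [Measure.bind_apply MeasurableSet.of_discrete Measurable.of_discrete.aemeasurable,
    lintegral_countable']
  refine tsum_congr fun m => ?_
  rw [Measure.map_apply (measurable_U hG.meas t₀) (measurableSet_singleton m), mul_comm]
  rfl

/-- Lemma 2.7: the binomial process `Z_t(U_{t₀}, ε)` stochastically
dominates `U_{t₀+t}`; the law of `Z_t(U_{t₀}, ε)` is the mixture over the value of
`U_{t₀}` of the binomial process laws. -/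
theorem statement6 (n : ℕ) (hn : 1 ≤ n) (ε : ℝ) (hε : |ε| < 1) (M : ℕ) (hM2 : 2 ≤ M)
    (hM : (M : ℝ) = (1 + ε) * n / 2)
    (Ωs : Type) [MeasurableSpace Ωs] (μ : Measure Ωs) (G : ℕ × ℕ → Ωs → ℕ)
    (hG : IsDriver n μ G) (t₀ t : ℕ) :
    ∀ z : ℕ,
      μ {ω | z ≤ U M G ω (t₀ + t)} ≤
        ∑' m : ℕ,
          μ {ω | U M G ω t₀ = m} *
            (Zpmf (ENNReal.ofReal ((1 + ε) / 2)) t m).toMeasure {x | z ≤ x} :=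
  statement6_general n hn ε hε M hM Ωs μ G hG t₀ t

end Dispersion
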